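/- The tempering-variable thermostat stationarity identity: for constants μ, b_U, κ_ξ, m_ξ, T > 0 (with μ = [λ'(ξ)]² treated as a positive constant), the density π(p_ξ, s_ξ) = exp(−[p_ξ²/(2m_ξ) + (κ_ξ/2)(s_ξ − b_U/(m_ξT))²]/T) satisfies ∂_{p_ξ}(μ s_ξ p_ξ π) − ∂_{s_ξ}((μ/κ_ξ)(p_ξ²/m_ξ − T) π) + μ b_U ∂²_{p_ξ} π = 0 for all (p_ξ, s_ξ) ∈ ℝ². -/

import Mathlib

/-! The density factorises into Gaussians in `p` and `s`, so all its partial derivatives are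
polynomial multiples of itself: `∂ₚπ = -p/(mT) π`, `∂ₛπ = -κ(s - c)/T π` and
`∂ₚ²π = ((p/(mT))² - 1/(mT)) π`. Substituting, the three terms of the Fokker–Planck
operator collect to `μ (p²/(mT) - 1) (bU/(mT) - c) π`, which vanishes for the centre
`c = bU/(mT)`. -/

noncomputable section

namespace XiThermostat

variable (mξ κξ T c : ℝ)

def density (p s : ℝ) : ℝ :=
  Real.exp (-(p ^ 2 / (2 * mξ) + κξ / 2 * (s - c) ^ 2) / T)

theorem hasDerivAt_density_fst (p s : ℝ) :
    HasDerivAt (fun p' => density mξ κξ T c p' s)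
      (-p / (mξ * T) * density mξ κξ T c p s) p := by
  have hexponent : HasDerivAt (fun p' : ℝ => -(p' ^ 2 / (2 * mξ) + κξ / 2 * (s - c) ^ 2) / T)
      (-p / (mξ * T)) p := by
    refine ((((hasDerivAt_pow 2 p).div_const (2 * mξ)).add_const _).fun_neg.div_const T
      ).congr_deriv ?_
    ring
  simpa only [density, mul_comm] using hexponent.exp

theorem hasDerivAt_density_snd (p s : ℝ) :
    HasDerivAt (fun s' => density mξ κξ T c p s')
      (-(κξ * (s - c)) / T * density mξ κξ T c p s) s := by
  have hexponent : HasDerivAt (fun s' : ℝ => -(p ^ 2 / (2 * mξ) + κξ / 2 * (s' - c) ^ 2) / T)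
      (-(κξ * (s - c)) / T) s := by
    refine (((((hasDerivAt_id' s).sub_const c).fun_pow 2).const_mul (κξ / 2)).const_add
      (p ^ 2 / (2 * mξ)) |>.fun_neg.div_const T).congr_deriv ?_
    ring
  simpa only [density, mul_comm] using hexponent.exp

theorem deriv_deriv_density_fst (p s : ℝ) :
    deriv (deriv fun p' => density mξ κξ T c p' s) p
      = ((p / (mξ * T)) ^ 2 - 1 / (mξ * T)) * density mξ κξ T c p s := by
  have hderiv : (deriv fun p' => density mξ κξ T c p' s)
      = fun p' => -p' / (mξ * T) * density mξ κξ T c p' s :=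
    funext fun p' => (hasDerivAt_density_fst mξ κξ T c p' s).deriv
  rw [hderiv, (((hasDerivAt_id' p).fun_neg.div_const (mξ * T)).fun_mul
    (hasDerivAt_density_fst mξ κξ T c p s)).deriv]
  ring

end XiThermostat

end

open XiThermostat in
theorem xi_thermostat_fpe_cancellation_general (μ bU κξ mξ T : ℝ)
    (hκξ : 0 < κξ) (hmξ : 0 < mξ) (hT : 0 < T)
    (π : ℝ → ℝ → ℝ)
    (hπ : ∀ pξ sξ, π pξ sξ =
      Real.exp (-(pξ ^ 2 / (2 * mξ) + (κξ / 2) * (sξ - bU / (mξ * T)) ^ 2) / T)) :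
    ∀ pξ sξ : ℝ,
      deriv (fun p' => μ * sξ * p' * π p' sξ) pξ
        - deriv (fun s' => (μ / κξ) * (pξ ^ 2 / mξ - T) * π pξ s') sξ
        + μ * bU * deriv (deriv (fun p' => π p' sξ)) pξ
      = 0 := by
  intro p s
  obtain rfl : π = density mξ κξ T (bU / (mξ * T)) := funext₂ hπ
  rw [(((hasDerivAt_id' p).const_mul (μ * s)).fun_mul (hasDerivAt_density_fst ..)).deriv,
    ((hasDerivAt_density_snd ..).const_mul _).deriv, deriv_deriv_density_fst]
  field_simp
  ring

/-- The tempering-variable thermostat stationarity identity: for positive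
constants `μ = [λ'(ξ)]²`, `b_U`, `κ_ξ`, `m_ξ`, `T`, the density
`π(p_ξ,s_ξ) = exp(−[p_ξ²/(2m_ξ) + (κ_ξ/2)(s_ξ − b_U/(m_ξT))²]/T)` satisfies
`∂_{p_ξ}(μ s_ξ p_ξ π) − ∂_{s_ξ}((μ/κ_ξ)(p_ξ²/m_ξ − T)π) + μ b_U ∂²_{p_ξ} π = 0`
for all `(p_ξ, s_ξ) ∈ ℝ²`. -/
theorem xi_thermostat_fpe_cancellation (μ bU κξ mξ T : ℝ)
    (hμ : 0 < μ) (hbU : 0 < bU) (hκξ : 0 < κξ) (hmξ : 0 < mξ) (hT : 0 < T)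
    (π : ℝ → ℝ → ℝ)
    (hπ : ∀ pξ sξ, π pξ sξ =
      Real.exp (-(pξ ^ 2 / (2 * mξ) + (κξ / 2) * (sξ - bU / (mξ * T)) ^ 2) / T)) :
    ∀ pξ sξ : ℝ,
      deriv (fun p' => μ * sξ * p' * π p' sξ) pξ
        - deriv (fun s' => (μ / κξ) * (pξ ^ 2 / mξ - T) * π pξ s') sξ
        + μ * bU * deriv (deriv (fun p' => π p' sξ)) pξ
      = 0 :=
  xi_thermostat_fpe_cancellation_general μ bU κξ mξ T hκξ hmξ hT π hπ
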